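/- arXiv:2410.23273 — 6 statements merged into one kernel-verified Lean document; each statement's English description precedes it below -/
import Mathlib

section
/- There exists an instance of non-centroid clustering with n = 4 agents and k = 2, with loss functions taking values in the extended nonnegative reals [0, ∞], such that for every finite α ≥ 1, no 2-clustering of the agents is in the α-core. Concretely, one may take agents {0,1,2,3} where for each i ∈ {0,1,2}: ℓ_i(S) = ∞ if S = {0,1,2} or 3 ∈ S; ℓ_i(S) = 0 if S = {i, i+1 mod 3}; ℓ_i(S) = 1 if |S| = 2 and i+1 mod 3 ∉ S; and agent 3 has arbitrary losses. -/
/-!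
Agents `0, 1, 2` form a cycle in which each agent `i` wants exactly to be paired with its
successor `i + 1 mod 3`, while any group containing agent `3` or all of `0, 1, 2` is infinitely bad
for them. In every 2-clustering some cycle agent `j` sits in such a crowded cluster, so its
predecessor `i` cannot have loss `0`: that would put `i` and `j` in one uncrowded cluster. Then the
pair `{i, j}` blocks for every finite `α`: `i` drops to loss `0` and `j` to the finite loss `α`.
-/

open scoped ENNReal

/-- The cluster containing agent `i` under the clustering (assignment) `C`. -/
def clusterOf {n k : ℕ} (C : Fin n → Fin k) (i : Fin n) : Finset (Fin n) :=
  Finset.univ.filter (fun j => C j = C i)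

/-- `C` is in the `α`-core (for extended-nonnegative-real-valued losses): there is no group `S`
of at least `n/k` agents such that `α · ℓ i S < ℓ i (C(i))` for every `i ∈ S`. -/
def InCoreE {n k : ℕ} (α : ℝ≥0∞) (ℓ : Fin n → Finset (Fin n) → ℝ≥0∞)
    (C : Fin n → Fin k) : Prop :=
  ¬ ∃ S : Finset (Fin n), (n : ℝ) / k ≤ S.card ∧
      ∀ i ∈ S, α * ℓ i S < ℓ i (clusterOf C i)

section Cluster

variable {n k : ℕ} {C : Fin n → Fin k} {i j : Fin n}

theorem mem_clusterOf : j ∈ clusterOf C i ↔ C j = C i := by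
  simp [clusterOf]

theorem clusterOf_eq_of_mem (h : j ∈ clusterOf C i) : clusterOf C j = clusterOf C i := by
  ext m
  rw [mem_clusterOf, mem_clusterOf, mem_clusterOf.mp h]

end Cluster

namespace CyclicCoreExample

def next (i : Fin 4) : Fin 4 := ⟨(i.val + 1) % 3, Nat.lt_succ_of_lt (Nat.mod_lt _ three_pos)⟩

def Crowded (S : Finset (Fin 4)) : Prop := (3 : Fin 4) ∈ S ∨ 3 ≤ S.card

instance : DecidablePred Crowded := fun S =>
  inferInstanceAs (Decidable ((3 : Fin 4) ∈ S ∨ 3 ≤ S.card))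

-- Agent `3`'s losses are arbitrary in the example; here it just reuses the formula.
noncomputable def loss (i : Fin 4) (S : Finset (Fin 4)) : ℝ≥0∞ :=
  if Crowded S then ⊤ else if next i ∈ S then 0 else 1

theorem loss_eq_top_iff {i : Fin 4} {S : Finset (Fin 4)} : loss i S = ⊤ ↔ Crowded S := by
  unfold loss
  split_ifs <;> simp_all

theorem pair_next_facts {i : Fin 4} (hi : i.val < 3) :
    i ≠ next i ∧ (3 : Fin 4) ∉ ({i, next i} : Finset (Fin 4)) ∧
      next (next i) ∉ ({i, next i} : Finset (Fin 4)) := by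
  revert i; decide

theorem not_crowded_pair_next {i : Fin 4} (hi : i.val < 3) : ¬ Crowded {i, next i} := by
  obtain ⟨hne, h3, -⟩ := pair_next_facts hi
  simp [Crowded, h3, Finset.card_pair hne]

theorem loss_pair_next {i : Fin 4} (hi : i.val < 3) : loss i {i, next i} = 0 := by
  simp [loss, not_crowded_pair_next hi]

theorem loss_of_card_eq_two {i : Fin 4} {S : Finset (Fin 4)} (hS : S.card = 2)
    (h3 : (3 : Fin 4) ∉ S) (hnext : next i ∉ S) : loss i S = 1 := by
  have : ¬ Crowded S := by simp [Crowded, hS, h3]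
  simp [loss, this, hnext]

/-- Pigeonhole: with two clusters, either some agent of the cycle `0 → 1 → 2 → 0` shares a cluster
with agent `3`, or all three of them share one. -/
theorem exists_crowded_clusterOf_next (C : Fin 4 → Fin 2) :
    ∃ i : Fin 4, i.val < 3 ∧ Crowded (clusterOf C (next i)) := by
  revert C; decide

theorem loss_ne_zero_of_next {C : Fin 4 → Fin 2} {i : Fin 4}
    (h : Crowded (clusterOf C (next i))) : loss i (clusterOf C i) ≠ 0 := by
  intro h0
  unfold loss at h0
  split_ifs at h0 with hcrowd hmem
  · exact ENNReal.top_ne_zero h0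
  · exact hcrowd (clusterOf_eq_of_mem hmem ▸ h)
  · exact one_ne_zero h0

theorem not_inCoreE {α : ℝ≥0∞} (hα : α ≠ ⊤) (C : Fin 4 → Fin 2) : ¬ InCoreE α loss C := by
  obtain ⟨i, hi, hcrowd⟩ := exists_crowded_clusterOf_next C
  obtain ⟨hne, h3, hnext⟩ := pair_next_facts hi
  have hcard : ({i, next i} : Finset (Fin 4)).card = 2 := Finset.card_pair hne
  refine not_not.mpr ⟨{i, next i}, by rw [hcard]; norm_num, ?_⟩
  simp only [Finset.mem_insert, Finset.mem_singleton, forall_eq_or_imp, forall_eq]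
  constructor
  · rw [loss_pair_next hi, mul_zero]
    exact pos_iff_ne_zero.mpr (loss_ne_zero_of_next hcrowd)
  · rw [loss_of_card_eq_two hcard h3 hnext, mul_one, loss_eq_top_iff.mpr hcrowd]
    exact hα.lt_top

end CyclicCoreExample

/-- There is an instance with `n = 4` agents and `k = 2` (concretely, the one where for
`i ∈ {0,1,2}`: `ℓ i S = ∞` if `S = {0,1,2}` or `3 ∈ S`; `ℓ i S = 0` if `S = {i, i+1 mod 3}`;
`ℓ i S = 1` if `|S| = 2` and `i+1 mod 3 ∉ S` (and `3 ∉ S`); agent `3` arbitrary)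
such that for every finite `α ≥ 1`, no 2-clustering is in the `α`-core. -/
theorem stmt0 :
    ∃ ℓ : Fin 4 → Finset (Fin 4) → ℝ≥0∞,
      (∀ i : Fin 4, i.val < 3 → ∀ S : Finset (Fin 4), i ∈ S →
        ((S = ({0, 1, 2} : Finset (Fin 4)) ∨ (3 : Fin 4) ∈ S) → ℓ i S = ⊤) ∧
        (S = ({i, ⟨(i.val + 1) % 3, by omega⟩} : Finset (Fin 4)) → ℓ i S = 0) ∧
        (S.card = 2 → (3 : Fin 4) ∉ S → (⟨(i.val + 1) % 3, by omega⟩ : Fin 4) ∉ S →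
          ℓ i S = 1)) ∧
      ∀ α : ℝ≥0∞, 1 ≤ α → α ≠ ⊤ → ∀ C : Fin 4 → Fin 2, ¬ InCoreE α ℓ C := by
  refine ⟨CyclicCoreExample.loss, fun i hi S _ => ⟨?_, ?_, CyclicCoreExample.loss_of_card_eq_two⟩,
    fun α _ hα => CyclicCoreExample.not_inCoreE hα⟩
  · rintro (rfl | h3)
    · exact CyclicCoreExample.loss_eq_top_iff.mpr (Or.inr (by decide))
    · exact CyclicCoreExample.loss_eq_top_iff.mpr (Or.inl h3)
  · rintro rfl
    exact CyclicCoreExample.loss_pair_next hi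
end

section
/- For every α with 1 ≤ α < (1+√3)/2, there exist a number of agents n, a number of clusters k, and an extended metric d on the n agents (distances taking values in [0, ∞] and satisfying the triangle inequality) such that no k-clustering is in the α-core for the average loss. -/
/-!
A single instance with eight agents and `k = 2` already has no `137/100`-core clustering, and
`137/100 > (1 + √3)/2 ≈ 1.366`. The agents sit at four locations: three at `A`, three at `B`,
and two outliers `x`, `y`. For every assignment of the agents to two clusters, one of eight
coalitions of four agents lowers the average loss of each member by a factor above `1.37`;
this is a finite check over the `2⁸` assignments, done with integer arithmetic.
-/

open scoped ENNReal

/-- The average loss of agent `i` in cluster `S`, for an extended metric `d`. -/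
noncomputable def avgLossE {n : ℕ} (d : Fin n → Fin n → ℝ≥0∞) (i : Fin n)
    (S : Finset (Fin n)) : ℝ≥0∞ :=
  (∑ j ∈ S, d i j) / (S.card : ℝ≥0∞)

open Finset

lemma ofReal_mul_natCast_div_lt {α : ℝ} {p q a b s c : ℕ} (hα : q * α ≤ p) (hs : s ≠ 0)
    (hc : c ≠ 0) (h : p * a * c < q * b * s) : ENNReal.ofReal α * (a / s) < b / c := by
  have hq : 0 < q := Nat.pos_of_ne_zero (by rintro rfl; simp at h)
  have hb : 0 < b := Nat.pos_of_ne_zero (by rintro rfl; simp at h)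
  have hs' : (0 : ℝ) < s := by positivity
  have hc' : (0 : ℝ) < c := by positivity
  have hreal : α * a * c < b * s := by
    have h' : (p * a * c : ℝ) < q * b * s := by exact_mod_cast h
    have : (q : ℝ) * (α * a * c) ≤ p * a * c := by
      rw [← mul_assoc, ← mul_assoc]; gcongr
    nlinarith [show (0 : ℝ) < q by positivity]
  rw [← ENNReal.ofReal_natCast a, ← ENNReal.ofReal_natCast s, ← ENNReal.ofReal_div_of_pos hs',
    ← ENNReal.ofReal_mul' (by positivity), ← ENNReal.ofReal_natCast b, ← ENNReal.ofReal_natCast c,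
    ← ENNReal.ofReal_div_of_pos hc', ENNReal.ofReal_lt_ofReal_iff (by positivity), mul_div_assoc',
    div_lt_div_iff₀ hs' hc']
  linarith

lemma mem_clusterOf_self {n k : ℕ} (C : Fin n → Fin k) (i : Fin n) : i ∈ clusterOf C i := by
  simp [clusterOf]

lemma avgLossE_natCast {n : ℕ} (D : Fin n → Fin n → ℕ) (i : Fin n) (S : Finset (Fin n)) :
    avgLossE (fun i j => (D i j : ℝ≥0∞)) i S = ((∑ j ∈ S, D i j : ℕ) : ℝ≥0∞) / S.card := by
  simp [avgLossE]

lemma ofReal_mul_avgLossE_lt {n k : ℕ} {D : Fin n → Fin n → ℕ} {α : ℝ} {p q : ℕ}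
    (hα : q * α ≤ p) {C : Fin n → Fin k} {S : Finset (Fin n)}
    (hS : ∀ i ∈ S, p * (∑ j ∈ S, D i j) * #(clusterOf C i)
      < q * (∑ j ∈ clusterOf C i, D i j) * #S) :
    ∀ i ∈ S, ENNReal.ofReal α * avgLossE (fun i j => (D i j : ℝ≥0∞)) i S
      < avgLossE (fun i j => (D i j : ℝ≥0∞)) i (clusterOf C i) := by
  intro i hi
  rw [avgLossE_natCast, avgLossE_natCast]
  exact ofReal_mul_natCast_div_lt hα (card_ne_zero_of_mem hi)
    (card_ne_zero_of_mem (mem_clusterOf_self C i)) (hS i hi)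

/-- Agents `0,1,2` sit at `A`, `3,4,5` at `B`, `6` at `x` and `7` at `y`, with
`d(A,B) = 10`, `d(A,x) = 51`, `d(A,y) = 14`, `d(B,x) = 58`, `d(B,y) = 21`, `d(x,y) = 60`. -/
def noCoreDist : Fin 8 → Fin 8 → ℕ :=
  ![![0, 0, 0, 10, 10, 10, 51, 14],
    ![0, 0, 0, 10, 10, 10, 51, 14],
    ![0, 0, 0, 10, 10, 10, 51, 14],
    ![10, 10, 10, 0, 0, 0, 58, 21],
    ![10, 10, 10, 0, 0, 0, 58, 21],
    ![10, 10, 10, 0, 0, 0, 58, 21],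
    ![51, 51, 51, 58, 58, 58, 0, 60],
    ![14, 14, 14, 21, 21, 21, 60, 0]]

lemma noCoreDist_self : ∀ i, noCoreDist i i = 0 := by decide

lemma noCoreDist_comm : ∀ i j, noCoreDist i j = noCoreDist j i := by decide

lemma noCoreDist_triangle : ∀ i j l, noCoreDist i l ≤ noCoreDist i j + noCoreDist j l := by
  decide

def noCoreCoalitions : List (Finset (Fin 8)) :=
  [{0, 1, 2, 3}, {0, 1, 2, 7}, {0, 3, 4, 5}, {1, 3, 4, 5}, {2, 3, 4, 5}, {3, 4, 5, 7},
    {0, 1, 2, 4}, {0, 1, 2, 5}]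

set_option maxRecDepth 10000 in
theorem exists_noCoreCoalition_blocking (C : Fin 8 → Fin 2) :
    ∃ S ∈ noCoreCoalitions, 4 ≤ #S ∧ ∀ i ∈ S,
      137 * (∑ j ∈ S, noCoreDist i j) * #(clusterOf C i)
        < 100 * (∑ j ∈ clusterOf C i, noCoreDist i j) * #S := by
  revert C
  decide

theorem stmt1_general (α : ℝ) (hα2 : α < (1 + Real.sqrt 3) / 2) :
    ∃ (n k : ℕ), 1 ≤ k ∧ k ≤ n ∧
      ∃ d : Fin n → Fin n → ℝ≥0∞,
        (∀ i, d i i = 0) ∧ (∀ i j, d i j = d j i) ∧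
        (∀ i j l, d i l ≤ d i j + d j l) ∧
        ∀ C : Fin n → Fin k, ∃ S : Finset (Fin n), (n : ℝ) / k ≤ S.card ∧
          ∀ i ∈ S, ENNReal.ofReal α * avgLossE d i S < avgLossE d i (clusterOf C i) := by
  have hsqrt3 : Real.sqrt 3 < 1.74 := by
    rw [Real.sqrt_lt' (by norm_num)]; norm_num
  have hα : ((100 : ℕ) : ℝ) * α ≤ (137 : ℕ) := by push_cast; linarith
  refine ⟨8, 2, by norm_num, by norm_num, fun i j => (noCoreDist i j : ℝ≥0∞),
    fun i => by simp [noCoreDist_self], fun i j => by simp only [noCoreDist_comm i j],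
    fun i j l => by dsimp only; exact_mod_cast noCoreDist_triangle i j l, fun C => ?_⟩
  obtain ⟨S, -, hcard, hblock⟩ := exists_noCoreCoalition_blocking C
  refine ⟨S, ?_, ofReal_mul_avgLossE_lt hα hblock⟩
  exact (by norm_num : ((8 : ℕ) : ℝ) / (2 : ℕ) = 4).trans_le (by exact_mod_cast hcard)

/-- For every `α` with `1 ≤ α < (1+√3)/2`, there are a number of agents `n`, a number of
clusters `k`, and an extended (pseudo)metric `d` on the agents such that no `k`-clustering is
in the `α`-core for the average loss. -/
theorem stmt1 (α : ℝ) (hα1 : 1 ≤ α) (hα2 : α < (1 + Real.sqrt 3) / 2) :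
    ∃ (n k : ℕ), 1 ≤ k ∧ k ≤ n ∧
      ∃ d : Fin n → Fin n → ℝ≥0∞,
        (∀ i, d i i = 0) ∧ (∀ i j, d i j = d j i) ∧
        (∀ i j l, d i l ≤ d i j + d j l) ∧
        ∀ C : Fin n → Fin k, ∃ S : Finset (Fin n), (n : ℝ) / k ≤ S.card ∧
          ∀ i ∈ S, ENNReal.ofReal α * avgLossE d i S < avgLossE d i (clusterOf C i) :=
  stmt1_general α hα2
end

section
/- For any n agents equipped with a metric d and any number of clusters k with 1 ≤ k < n, there exists a k-clustering that is in the (2·⌈n/k⌉ − 3)-core for the average loss. -/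
open scoped Classical

/-- The maximum of `f` over the finite set `S` (`0` if `S` is empty). -/
noncomputable def maxOver {ι : Type*} (S : Finset ι) (f : ι → ℝ) : ℝ :=
  if h : S.Nonempty then S.sup' h f else 0

/-- The minimum of `f` over the finite set `S` (`0` if `S` is empty). -/
noncomputable def minOver {ι : Type*} (S : Finset ι) (f : ι → ℝ) : ℝ :=
  if h : S.Nonempty then S.inf' h f else 0

/-- The average loss of agent `i` in cluster `S`. -/
noncomputable def avgLoss {n : ℕ} (d : Fin n → Fin n → ℝ) (i : Fin n)
    (S : Finset (Fin n)) : ℝ :=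
  (∑ j ∈ S, d i j) / (S.card : ℝ)

/-- The maximum loss of agent `i` in cluster `S`. -/
noncomputable def maxLoss {n : ℕ} (d : Fin n → Fin n → ℝ) (i : Fin n)
    (S : Finset (Fin n)) : ℝ :=
  maxOver S (d i)

/-- `d` is a (pseudo)metric on the agents: zero on the diagonal, symmetric, and
satisfying the triangle inequality. -/
def IsPseudometric {n : ℕ} (d : Fin n → Fin n → ℝ) : Prop :=
  (∀ i, d i i = 0) ∧ (∀ i j, d i j = d j i) ∧ (∀ i j l, d i l ≤ d i j + d j l)

/-- `C` is in the `α`-core: there is no group `S` of at least `n/k` agents such that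
`α · ℓ i S < ℓ i (C(i))` for every `i ∈ S`. -/
def InCore {n k : ℕ} (α : ℝ) (ℓ : Fin n → Finset (Fin n) → ℝ) (C : Fin n → Fin k) : Prop :=
  ¬ ∃ S : Finset (Fin n), (n : ℝ) / k ≤ S.card ∧ ∀ i ∈ S, α * ℓ i S < ℓ i (clusterOf C i)

/-- `C` satisfies `α`-FJR: there is no group `S` of at least `n/k` agents such that
`α · max_{i ∈ S} ℓ i S < min_{j ∈ S} ℓ j (C(j))`. -/
def SatisfiesFJR {n k : ℕ} (α : ℝ) (ℓ : Fin n → Finset (Fin n) → ℝ)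
    (C : Fin n → Fin k) : Prop :=
  ¬ ∃ S : Finset (Fin n), (n : ℝ) / k ≤ S.card ∧
      α * maxOver S (fun i => ℓ i S) < minOver S (fun j => ℓ j (clusterOf C j))

/-! Greedy capture. With `m = ⌈n/k⌉`, repeatedly remove from the remaining agents an `m`-set `T`
of least radius `r` around one of its own points `c`; at most `k` sets are removed, and the fewer
than `m` agents left over form one more cluster. Let `S`, `#S ≥ m`, be a group and let `T` be the
first removed set meeting `S`, say at `i`. All of `S` was still available when `T` was chosen, so
fewer than `m` agents of `S` lie at distance `< r` from `i`, and the average distance from `i` to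
`S` is at least `r / m`. Routing through `c`, the distances from `i` to `T` add up to at most
`(2m - 3) r`. -/

open Finset

section maxOver

variable {ι : Type*} {S : Finset ι} {f : ι → ℝ}

lemma le_maxOver {y : ι} (hy : y ∈ S) : f y ≤ maxOver S f := by
  rw [maxOver, dif_pos ⟨y, hy⟩]
  exact le_sup' f hy

lemma maxOver_lt {r : ℝ} (hS : S.Nonempty) (h : ∀ y ∈ S, f y < r) : maxOver S f < r := by
  rw [maxOver, dif_pos hS]
  exact (sup'_lt_iff hS).2 h

end maxOver

lemma mul_le_sum_of_card_filter_lt {ι : Type*} {s : Finset ι} {f : ι → ℝ} {m : ℕ} {r : ℝ}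
    (hf : ∀ y ∈ s, 0 ≤ f y) (hr : 0 ≤ r) (hsmall : #{y ∈ s | f y < r} < m) :
    ((#s : ℝ) - m + 1) * r ≤ ∑ y ∈ s, f y := by
  have hcard : (#s : ℝ) - m + 1 ≤ #{y ∈ s | ¬ f y < r} := by
    have hlt : (#{y ∈ s | f y < r} : ℝ) + 1 ≤ m := by exact_mod_cast hsmall
    have hsum : (#{y ∈ s | f y < r} : ℝ) + #{y ∈ s | ¬ f y < r} = #s := by
      exact_mod_cast card_filter_add_card_filter_not (fun y => f y < r)
    linarith
  calc ((#s : ℝ) - m + 1) * r ≤ #{y ∈ s | ¬ f y < r} * r :=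
        mul_le_mul_of_nonneg_right hcard hr
    _ = ∑ _y ∈ {y ∈ s | ¬ f y < r}, r := by rw [sum_const, nsmul_eq_mul]
    _ ≤ ∑ y ∈ {y ∈ s | ¬ f y < r}, f y :=
        sum_le_sum fun y hy => not_lt.1 (mem_filter.1 hy).2
    _ ≤ ∑ y ∈ s, f y := sum_le_sum_of_subset_of_nonneg (filter_subset _ _)
        fun y hy _ => hf y hy

namespace IsPseudometric

variable {n : ℕ} {d : Fin n → Fin n → ℝ}

lemma nonneg (hd : IsPseudometric d) (i j : Fin n) : 0 ≤ d i j := by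
  have := hd.2.2 i j i
  rw [hd.1, hd.2.1 j i] at this
  linarith

lemma sum_le_of_mem_closedBall (hd : IsPseudometric d) {T : Finset (Fin n)} {c i : Fin n}
    {r : ℝ} (hc : c ∈ T) (hi : i ∈ T) (hT : 2 ≤ #T) (hr : ∀ y ∈ T, d c y ≤ r) :
    ∑ y ∈ T, d i y ≤ (2 * #T - 3) * r := by
  have hcard : ((#(T.erase i) : ℕ) : ℝ) = #T - 1 := by
    rw [card_erase_of_mem hi, Nat.cast_sub (by omega), Nat.cast_one]
  have hcard' : ((#(T.erase c) : ℕ) : ℝ) = #T - 1 := by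
    rw [card_erase_of_mem hc, Nat.cast_sub (by omega), Nat.cast_one]
  have hT2 : (2 : ℝ) ≤ #T := by exact_mod_cast hT
  -- route every `y ≠ i` through the centre `c`
  have hvia : ∑ y ∈ T, d i y ≤ (#T - 2) * d i c + ∑ y ∈ T, d c y := by
    calc ∑ y ∈ T, d i y = ∑ y ∈ T.erase i, d i y := (sum_erase _ (hd.1 i)).symm
      _ ≤ ∑ y ∈ T.erase i, (d i c + d c y) := sum_le_sum fun y _ => hd.2.2 i c y
      _ = (#T - 1) * d i c + (∑ y ∈ T, d c y - d c i) := by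
        rw [sum_add_distrib, sum_const, nsmul_eq_mul, hcard, sum_erase_eq_sub hi]
      _ = (#T - 2) * d i c + ∑ y ∈ T, d c y := by rw [hd.2.1 c i]; ring
  have hcentre : ∑ y ∈ T, d c y ≤ (#T - 1) * r := by
    calc ∑ y ∈ T, d c y = ∑ y ∈ T.erase c, d c y := (sum_erase _ (hd.1 c)).symm
      _ ≤ #(T.erase c) • r := sum_le_card_nsmul _ _ _ fun y hy => hr y (mem_of_mem_erase hy)
      _ = (#T - 1) * r := by rw [nsmul_eq_mul, hcard']
  have hic : d i c ≤ r := hd.2.1 i c ▸ hr i hi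
  nlinarith

lemma avgLoss_le_of_mem_closedBall (hd : IsPseudometric d) {S T : Finset (Fin n)} {c i : Fin n}
    {r : ℝ} {m : ℕ} (hm : 2 ≤ m) (hT : #T = m) (hc : c ∈ T) (hi : i ∈ T)
    (hr : ∀ y ∈ T, d c y ≤ r) (hS : m ≤ #S) (hsmall : #{y ∈ S | d i y < r} < m) :
    avgLoss d i T ≤ (2 * m - 3) * avgLoss d i S := by
  have hr0 : 0 ≤ r := hd.1 c ▸ hr c hc
  have hm' : (2 : ℝ) ≤ m := by exact_mod_cast hm
  have hS' : (m : ℝ) ≤ #S := by exact_mod_cast hS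
  have hupper : ∑ y ∈ T, d i y ≤ (2 * m - 3) * r :=
    hT ▸ sum_le_of_mem_closedBall hd hc hi (hT ▸ hm) hr
  have hlower : ((#S : ℝ) - m + 1) * r ≤ ∑ y ∈ S, d i y :=
    mul_le_sum_of_card_filter_lt (fun y _ => nonneg hd i y) hr0 hsmall
  -- `(#S - m + 1) * m ≥ #S`, so the average over `S` is at least `r / m`
  have hmean : r * #S ≤ m * ∑ y ∈ S, d i y := by
    nlinarith [mul_nonneg (mul_nonneg (sub_nonneg.2 hS') (by linarith : (0 : ℝ) ≤ m - 1)) hr0]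
  unfold avgLoss
  rw [hT, div_le_iff₀ (by linarith), mul_div_assoc', div_mul_eq_mul_div,
    le_div_iff₀ (by linarith)]
  nlinarith [mul_le_mul_of_nonneg_left hmean (by linarith : (0 : ℝ) ≤ 2 * m - 3)]

lemma exists_closedBall_of_small_openBalls (hd : IsPseudometric d) {R : Finset (Fin n)} {m : ℕ}
    (hm : 1 ≤ m) (hR : m ≤ #R) :
    ∃ T ⊆ R, #T = m ∧ ∃ c ∈ T, ∃ r, (∀ y ∈ T, d c y ≤ r) ∧
      ∀ x ∈ R, #{y ∈ R | d x y < r} < m := by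
  set P := {p ∈ R ×ˢ R.powersetCard m | p.1 ∈ p.2}
  have hP : P.Nonempty := by
    obtain ⟨T, hTR, hTm⟩ := exists_subset_card_eq hR
    obtain ⟨c, hc⟩ := card_pos.1 (hTm ▸ hm : 0 < #T)
    exact ⟨(c, T), by simp [P, hc, hTR, hTm, hTR hc]⟩
  obtain ⟨⟨c, T⟩, hcT, hmin⟩ := exists_min_image P (fun p => maxOver p.2 (d p.1)) hP
  simp only [P, mem_filter, mem_product, mem_powersetCard] at hcT
  obtain ⟨⟨-, hTR, hTm⟩, hc⟩ := hcT
  refine ⟨T, hTR, hTm, c, hc, maxOver T (d c), fun y hy => le_maxOver hy, fun x hx => ?_⟩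
  by_contra! hbig
  obtain ⟨y, hy⟩ := card_pos.1 (lt_of_lt_of_le hm hbig)
  have hx_ball : x ∈ {y ∈ R | d x y < maxOver T (d c)} := by
    have := (mem_filter.1 hy).2
    simpa [hx, hd.1 x] using (nonneg hd x y).trans_lt this
  obtain ⟨T', hxT', hT'ball, hT'm⟩ :=
    exists_subsuperset_card_eq (singleton_subset_iff.2 hx_ball) (by simpa using hm) hbig
  have hT'R : T' ⊆ R := hT'ball.trans (filter_subset _ _)
  have hle := hmin (x, T') (by simp [P, hT'R, hT'm, hT'R (singleton_subset_iff.1 hxT'),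
    singleton_subset_iff.1 hxT'])
  have hlt : maxOver T' (d x) < maxOver T (d c) :=
    maxOver_lt ⟨x, singleton_subset_iff.1 hxT'⟩ fun y hy => (mem_filter.1 (hT'ball hy)).2
  exact hle.not_gt hlt

lemma exists_greedy_labelling (hd : IsPseudometric d) {m : ℕ} (hm : 2 ≤ m) (k : ℕ)
    (R : Finset (Fin n)) (hR : #R ≤ k * m) :
    ∃ f : Fin n → ℕ, (∀ x ∈ R, f x < k) ∧ ∀ S ⊆ R, m ≤ #S → ∃ i ∈ S,
      avgLoss d i {y ∈ R | f y = f i} ≤ (2 * m - 3) * avgLoss d i S := by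
  induction k generalizing R with
  | zero => exact ⟨0, by simp_all, fun S hSR hS => by simp_all⟩
  | succ k ih =>
    by_cases hsmall : #R < m
    · exact ⟨0, by simp, fun S hSR hS => absurd (card_le_card hSR) (by omega)⟩
    obtain ⟨T, hTR, hTm, c, hc, r, hr, hballs⟩ :=
      exists_closedBall_of_small_openBalls hd (by omega) (not_lt.1 hsmall)
    obtain ⟨g, hg_lt, hg⟩ := ih (R \ T) (by rw [card_sdiff_of_subset hTR, add_mul] at *; omega)
    set f : Fin n → ℕ := fun x => if x ∈ T then 0 else g x + 1 with hf
    refine ⟨f, fun x hx => ?_, fun S hSR hS => ?_⟩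
    · by_cases hxT : x ∈ T
      · simp [hf, hxT]
      · simpa [hf, hxT] using hg_lt x (mem_sdiff.2 ⟨hx, hxT⟩)
    by_cases hST : ∃ i ∈ S, i ∈ T
    · obtain ⟨i, hiS, hiT⟩ := hST
      have hcluster : {y ∈ R | f y = f i} = T := by
        ext y
        by_cases hy : y ∈ T
        · simp [hf, hy, hiT, hTR hy]
        · simp [hf, hy, hiT]
      refine ⟨i, hiS, hcluster ▸ avgLoss_le_of_mem_closedBall hd hm hTm hc hiT hr hS ?_⟩
      exact (card_le_card (filter_subset_filter _ hSR)).trans_lt (hballs i (hSR hiS))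
    · push Not at hST
      obtain ⟨i, hiS, hi⟩ := hg S (fun x hx => mem_sdiff.2 ⟨hSR hx, hST x hx⟩) hS
      have hcluster : {y ∈ R | f y = f i} = {y ∈ R \ T | g y = g i} := by
        ext y
        by_cases hy : y ∈ T <;> simp [hf, hy, hST i hiS]
      exact ⟨i, hiS, hcluster ▸ hi⟩

end IsPseudometric

/-- For any `n` agents with a metric `d` and any `k` with `1 ≤ k < n`, there exists a
`k`-clustering in the `(2⌈n/k⌉ − 3)`-core for the average loss. -/
theorem stmt2 (n k : ℕ) (hk : 1 ≤ k) (hkn : k < n) (d : Fin n → Fin n → ℝ)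
    (hd : IsPseudometric d) :
    ∃ C : Fin n → Fin k, InCore (2 * (⌈(n : ℝ) / k⌉₊ : ℝ) - 3) (avgLoss d) C := by
  set m := ⌈(n : ℝ) / k⌉₊
  have hk0 : (0 : ℝ) < k := by exact_mod_cast hk
  have hm : 2 ≤ m := Nat.lt_ceil.2 <| by
    rw [Nat.cast_one, lt_div_iff₀ hk0, one_mul]; exact_mod_cast hkn
  have hnkm : n ≤ k * m := by
    have := Nat.le_ceil ((n : ℝ) / k)
    rw [div_le_iff₀ hk0] at this
    exact_mod_cast (by linarith : (n : ℝ) ≤ k * m)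
  obtain ⟨f, hf_lt, hf⟩ :=
    IsPseudometric.exists_greedy_labelling hd hm k univ (by simpa using hnkm)
  refine ⟨fun x => ⟨f x, hf_lt x (mem_univ x)⟩, fun ⟨S, hS, hblock⟩ => ?_⟩
  obtain ⟨i, hiS, hi⟩ := hf S (subset_univ S) (Nat.ceil_le.2 hS)
  have hcluster : clusterOf (fun x => (⟨f x, hf_lt x (mem_univ x)⟩ : Fin k)) i
      = {y ∈ (univ : Finset (Fin n)) | f y = f i} := by
    simp [clusterOf, Fin.ext_iff]
  have := hblock i hiS
  rw [hcluster] at this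
  linarith
end

section
/- For any n agents equipped with a metric d and any number of clusters k with 1 ≤ k ≤ n, there exists a k-clustering that is in the 2-core for the maximum loss. -/
open scoped Classical

/-!
Greedy capture: as long as at least `n / k` agents remain, remove a group of at least `n / k`
remaining agents of smallest diameter and make it a cluster; the fewer than `n / k` agents left
at the end form the last cluster, so at most `k` clusters arise. If a group `S` of size at least
`n / k` blocked the result, let `j ∈ S` be a member of the first captured cluster `T` meeting `S`.
When `T` was chosen all of `S` was still available, so `diam T ≤ diam S`. By the triangle
inequality through `j`, `diam S ≤ 2 ℓ_j(S)`, hence `ℓ_j(T) ≤ diam T ≤ 2 ℓ_j(S)`, and `j` does not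
gain by a factor of more than two.
-/

lemma le_maxOver_s3 {ι : Type*} {S : Finset ι} {f : ι → ℝ} {j : ι} (hj : j ∈ S) :
    f j ≤ maxOver S f := by
  rw [maxOver, dif_pos ⟨j, hj⟩]
  exact Finset.le_sup' f hj

lemma maxOver_le {ι : Type*} {S : Finset ι} {f : ι → ℝ} {c : ℝ} (hS : S.Nonempty)
    (h : ∀ j ∈ S, f j ≤ c) : maxOver S f ≤ c := by
  rw [maxOver, dif_pos hS]
  exact Finset.sup'_le hS f h

noncomputable def diameter {n : ℕ} (d : Fin n → Fin n → ℝ) (S : Finset (Fin n)) : ℝ :=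
  maxOver S (fun i => maxLoss d i S)

lemma maxLoss_le_diameter {n : ℕ} (d : Fin n → Fin n → ℝ) {S : Finset (Fin n)} {j : Fin n}
    (hj : j ∈ S) : maxLoss d j S ≤ diameter d S :=
  le_maxOver_s3 (f := fun i => maxLoss d i S) hj

lemma diameter_le_two_mul_maxLoss {n : ℕ} {d : Fin n → Fin n → ℝ}
    (hsymm : ∀ i j, d i j = d j i) (htri : ∀ i j l, d i l ≤ d i j + d j l)
    {S : Finset (Fin n)} {j : Fin n} (hj : j ∈ S) : diameter d S ≤ 2 * maxLoss d j S := by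
  have hS : S.Nonempty := ⟨j, hj⟩
  refine maxOver_le hS fun i hi => maxOver_le hS fun l hl => ?_
  have hji : d j i ≤ maxLoss d j S := le_maxOver_s3 hi
  have hjl : d j l ≤ maxLoss d j S := le_maxOver_s3 hl
  linarith [htri i j l, hsymm i j]

section Greedy

variable {α : Type*} (cost : Finset α → ℝ) (m : ℝ)

/-- A clustering of `R` into at most `t` clusters, encoded by labels: the clusters are the sets
`{x ∈ R | g x = c}` with `c < t`. -/
def IsGreedyLabeling (R : Finset α) (t : ℕ) (g : α → ℕ) : Prop :=
  (∀ i ∈ R, g i < t) ∧ ((t : ℝ) - 1) * m < R.card ∧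
    ∀ S ⊆ R, m ≤ S.card → ∃ j ∈ S, cost {x ∈ R | g x = g j} ≤ cost S

variable {cost m}

lemma filter_ite_eq_of_mem {R S₀ : Finset α} (hS₀R : S₀ ⊆ R) {t : ℕ} {g : α → ℕ}
    (hg : ∀ i ∈ R \ S₀, g i < t) {j : α} (hj : j ∈ S₀) :
    {x ∈ R | (if x ∈ S₀ then t else g x) = if j ∈ S₀ then t else g j} = S₀ := by
  ext x
  by_cases hx : x ∈ S₀
  · simp [hx, hj, hS₀R hx]
  · simpa [hx, hj] using fun hxR => (hg x (Finset.mem_sdiff.mpr ⟨hxR, hx⟩)).ne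

lemma filter_ite_eq_of_not_mem {R S₀ : Finset α} {t : ℕ} {g : α → ℕ}
    (hg : ∀ i ∈ R \ S₀, g i < t) {j : α} (hj : j ∈ R \ S₀) :
    {x ∈ R | (if x ∈ S₀ then t else g x) = if j ∈ S₀ then t else g j} =
      {x ∈ R \ S₀ | g x = g j} := by
  have hjS₀ := (Finset.mem_sdiff.mp hj).2
  ext x
  by_cases hx : x ∈ S₀
  · simpa [hx, hjS₀] using fun _ => (hg j hj).ne'
  · simp [hx, hjS₀]

lemma IsGreedyLabeling.insert_cluster {R S₀ : Finset α} (hS₀R : S₀ ⊆ R) (hS₀m : m ≤ S₀.card)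
    (hS₀min : ∀ S ⊆ R, m ≤ S.card → cost S₀ ≤ cost S) {t : ℕ} {g : α → ℕ}
    (hg : IsGreedyLabeling cost m (R \ S₀) t g) :
    IsGreedyLabeling cost m R (t + 1) (fun i => if i ∈ S₀ then t else g i) := by
  obtain ⟨hlt, hcount, hcapture⟩ := hg
  refine ⟨fun i hi => ?_, ?_, fun S hSR hSm => ?_⟩
  · by_cases h : i ∈ S₀
    · simp [h]
    · simpa [h] using (hlt i (Finset.mem_sdiff.mpr ⟨hi, h⟩)).trans (Nat.lt_succ_self t)
  · have hcard : ((R \ S₀).card : ℝ) + S₀.card = R.card := by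
      exact_mod_cast Finset.card_sdiff_add_card_eq_card hS₀R
    push_cast
    linarith
  · by_cases hmeet : (S ∩ S₀).Nonempty
    · obtain ⟨j, hj⟩ := hmeet
      rw [Finset.mem_inter] at hj
      refine ⟨j, hj.1, ?_⟩
      rw [filter_ite_eq_of_mem hS₀R hlt hj.2]
      exact hS₀min S hSR hSm
    · have hSsub : S ⊆ R \ S₀ := fun x hx =>
        Finset.mem_sdiff.mpr ⟨hSR hx, fun hxS₀ => hmeet ⟨x, Finset.mem_inter.mpr ⟨hx, hxS₀⟩⟩⟩
      obtain ⟨j, hjS, hj⟩ := hcapture S hSsub hSm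
      refine ⟨j, hjS, ?_⟩
      rwa [filter_ite_eq_of_not_mem hlt (hSsub hjS)]

lemma exists_isGreedyLabeling (cost : Finset α → ℝ) (hm : 0 < m) (R : Finset α) :
    ∃ t g, IsGreedyLabeling cost m R t g := by
  classical
  induction R using Finset.strongInduction with
  | _ R ih =>
  by_cases hR : m ≤ R.card
  · obtain ⟨S₀, hS₀, hS₀min⟩ := Finset.exists_min_image
      {S ∈ R.powerset | m ≤ S.card} cost ⟨R, by simp [hR]⟩
    simp only [Finset.mem_filter, Finset.mem_powerset] at hS₀ hS₀min
    obtain ⟨hS₀R, hS₀m⟩ := hS₀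
    obtain ⟨x, hx⟩ : S₀.Nonempty := by
      rw [← Finset.card_pos]
      exact_mod_cast hm.trans_le hS₀m
    have hssub : R \ S₀ ⊂ R :=
      Finset.sdiff_ssubset hS₀R ⟨x, hx⟩
    obtain ⟨t, g, hg⟩ := ih _ hssub
    exact ⟨_, _, hg.insert_cluster hS₀R hS₀m fun S hSR hSm => hS₀min S ⟨hSR, hSm⟩⟩
  · have hsmall : ∀ S ⊆ R, m ≤ S.card → False := fun S hSR hSm =>
      hR (hSm.trans (by exact_mod_cast Finset.card_le_card hSR))
    rcases R.eq_empty_or_nonempty with rfl | hne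
    · exact ⟨0, fun _ => 0, by simp, by simpa using hm, fun S hS hSm => (hsmall S hS hSm).elim⟩
    · refine ⟨1, fun _ => 0, fun _ _ => Nat.one_pos, ?_, fun S hS hSm => (hsmall S hS hSm).elim⟩
      simpa using hne

end Greedy

/-- For any `n` agents with a metric `d` and any `k` with `1 ≤ k ≤ n`, there exists a
`k`-clustering in the `2`-core for the maximum loss. -/
theorem stmt3 (n k : ℕ) (hk : 1 ≤ k) (hkn : k ≤ n) (d : Fin n → Fin n → ℝ)
    (hd : IsPseudometric d) :
    ∃ C : Fin n → Fin k, InCore 2 (maxLoss d) C := by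
  obtain ⟨-, hsymm, htri⟩ := hd
  have hk0 : (0 : ℝ) < k := by exact_mod_cast hk
  have hn0 : (0 : ℝ) < n := by exact_mod_cast hk.trans hkn
  obtain ⟨t, g, hlt, hcount, hcapture⟩ :=
    exists_isGreedyLabeling (diameter d) (div_pos hn0 hk0) Finset.univ
  have htk : t ≤ k := by
    have hlt' : ((t : ℝ) - 1) * (n / k) < k * (n / k) :=
      calc ((t : ℝ) - 1) * (n / k) < n := by simpa using hcount
        _ = k * (n / k) := by field_simp
    have : (t : ℝ) < k + 1 := by linarith [lt_of_mul_lt_mul_right hlt' (div_pos hn0 hk0).le]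
    have : t < k + 1 := by exact_mod_cast this
    omega
  let C : Fin n → Fin k := fun i => ⟨g i, (hlt i (Finset.mem_univ i)).trans_le htk⟩
  refine ⟨C, fun ⟨S, hSm, hS⟩ => ?_⟩
  obtain ⟨j, hjS, hj⟩ := hcapture S (Finset.subset_univ S) hSm
  have hCj : clusterOf C j = ({x | g x = g j} : Finset (Fin n)) := by
    ext x
    simp [clusterOf, C, Fin.ext_iff]
  refine (hS j hjS).not_ge ?_
  calc maxLoss d j (clusterOf C j) = maxLoss d j {x | g x = g j} := by rw [hCj]
    _ ≤ diameter d {x | g x = g j} := maxLoss_le_diameter d (by simp)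
    _ ≤ diameter d S := hj
    _ ≤ 2 * maxLoss d j S := diameter_le_two_mul_maxLoss hsymm htri hjS
end

section
/- For any n agents equipped with a metric d, any number of clusters k with 1 ≤ k ≤ n, and any δ > 1, there exists a k-clustering C that is in the (2δ/(δ−1), δ)-core for the average loss; that is, there is no group S ⊆ N with |S| ≥ δ·n/k such that (2δ/(δ−1))·ℓ_i(S) < ℓ_i(C(i)) for all i ∈ S. -/
open scoped Classical

/-!
Greedy capture with threshold `m = ⌈n/k⌉`: repeatedly remove the smallest ball (around any
remaining agent) that holds `m` remaining agents, and put whatever is left into one last cluster.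
This gives at most `k` clusters. If `S` has `|S| ≥ δ n/k`, then by Markov's inequality each
`j ∈ S` has at least `|S|/δ ≥ n/k` members of `S` within `δ/(δ-1) · ℓ_j(S)`. Consider the first
removed ball meeting `S`: up to then all of `S` was still present, so its radius is at most
`δ/(δ-1) · ℓ_i(S)` for any `i` in the intersection, and `i`'s cluster has diameter at most twice
that radius.
-/

open Finset

theorem card_filter_avg_lt_mul_le {ι : Type*} (S : Finset ι) (f : ι → ℝ)
    (hf : ∀ i ∈ S, 0 ≤ f i) (c : ℝ) :
    (#{i ∈ S | c * ((∑ j ∈ S, f j) / #S) < f i} : ℝ) * c ≤ #S := by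
  set U := {i ∈ S | c * ((∑ j ∈ S, f j) / #S) < f i}
  set a := (∑ j ∈ S, f j) / #S
  rcases U.eq_empty_or_nonempty with hU | hU
  · simp [hU]
  have hS : (0 : ℝ) < #S := by exact_mod_cast (hU.mono (filter_subset _ _)).card_pos
  have hsum : ∑ j ∈ S, f j = #S * a := (mul_div_cancel₀ _ hS.ne').symm
  have ha : 0 ≤ a := div_nonneg (sum_nonneg hf) hS.le
  have hlt : #U * c * a < #S * a :=
    calc #U * c * a = ∑ _ ∈ U, c * a := by simp [mul_assoc]
      _ < ∑ i ∈ U, f i := sum_lt_sum_of_nonempty hU fun i hi => (mem_filter.1 hi).2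
      _ ≤ ∑ i ∈ S, f i :=
        sum_le_sum_of_subset_of_nonneg (filter_subset _ _) fun i hi _ => hf i hi
      _ = #S * a := hsum
  exact (lt_of_mul_lt_mul_right hlt ha).le

theorem card_le_mul_card_filter_le_mul_avg {ι : Type*} (S : Finset ι) (f : ι → ℝ)
    (hf : ∀ i ∈ S, 0 ≤ f i) {δ : ℝ} (hδ : 1 < δ) :
    (#S : ℝ) ≤ δ * #{i ∈ S | f i ≤ δ / (δ - 1) * ((∑ j ∈ S, f j) / #S)} := by
  set a := (∑ j ∈ S, f j) / #S
  have hmarkov : (#{i ∈ S | δ / (δ - 1) * a < f i} : ℝ) * δ ≤ #S * (δ - 1) := by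
    have h := mul_le_mul_of_nonneg_right (card_filter_avg_lt_mul_le S f hf (δ / (δ - 1)))
      (by linarith : (0 : ℝ) ≤ δ - 1)
    rwa [mul_assoc, div_mul_cancel₀ _ (by linarith)] at h
  have hsplit := card_filter_add_card_filter_not (s := S) fun i => f i ≤ δ / (δ - 1) * a
  simp only [not_le] at hsplit
  have hsplit' := congrArg (Nat.cast (R := ℝ)) hsplit
  push_cast at hsplit'
  nlinarith

section Greedy

variable {α : Type*} (d : α → α → ℝ)

noncomputable def ball (R : Finset α) (x : α) (r : ℝ) : Finset α := {j ∈ R | d x j ≤ r}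

theorem ball_subset_ball {R T : Finset α} (h : R ⊆ T) (x : α) (r : ℝ) :
    ball d R x r ⊆ ball d T x r :=
  filter_subset_filter _ h

theorem exists_subset_ball_self {R T : Finset α} (hTR : T ⊆ R) (hT : T.Nonempty) (x : α) :
    ∃ j ∈ T, T ⊆ ball d R x (d x j) := by
  obtain ⟨j, hj, hmax⟩ := T.exists_max_image (d x) hT
  exact ⟨j, hj, fun l hl => mem_filter.2 ⟨hTR hl, hmax l hl⟩⟩

theorem exists_smallest_ball (m : ℕ) {R : Finset α} (hm : 0 < m) (hR : m ≤ #R) :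
    ∃ x ρ, m ≤ #(ball d R x ρ) ∧ ∀ y ∈ R, ∀ r, m ≤ #(ball d R y r) → ρ ≤ r := by
  set cand := (R ×ˢ R).filter fun p => m ≤ #(ball d R p.1 (d p.1 p.2))
  have hcand : cand.Nonempty := by
    obtain ⟨x, hx⟩ := card_pos.1 (hm.trans_le hR)
    obtain ⟨j, hj, hRj⟩ := exists_subset_ball_self d subset_rfl ⟨x, hx⟩ x
    exact ⟨(x, j), mem_filter.2 ⟨mem_product.2 ⟨hx, hj⟩, hR.trans (card_le_card hRj)⟩⟩
  obtain ⟨⟨x, j⟩, hxj, hmin⟩ := cand.exists_min_image (fun p => d p.1 p.2) hcand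
  refine ⟨x, d x j, (mem_filter.1 hxj).2, fun y hy r hr => ?_⟩
  obtain ⟨j', hj', hsub⟩ := exists_subset_ball_self d (filter_subset _ R)
    (card_pos.1 (hm.trans_le hr)) y
  have hyj' : (y, j') ∈ cand := mem_filter.2
    ⟨mem_product.2 ⟨hy, (mem_filter.1 hj').1⟩, hr.trans (card_le_card hsub)⟩
  exact (hmin _ hyj').trans (mem_filter.1 hj').2

theorem le_two_mul_of_mem_ball (hsymm : ∀ i j, d i j = d j i)
    (htri : ∀ i j l, d i l ≤ d i j + d j l) {R : Finset α} {x i l : α} {ρ : ℝ}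
    (hi : i ∈ ball d R x ρ) (hl : l ∈ ball d R x ρ) : d i l ≤ 2 * ρ := by
  have := (mem_filter.1 hi).2
  have := (mem_filter.1 hl).2
  linarith [htri i x l, hsymm i x]

variable [DecidableEq α] (m : ℕ)

/-- The invariant maintained by greedy capture with threshold `m`. -/
def CapturesDense {R : Finset α} (P : Finpartition R) : Prop :=
  ∀ S ⊆ R, S.Nonempty → ∀ r : α → ℝ, (∀ j ∈ S, m ≤ #(ball d S j (r j))) →
    ∃ i ∈ S, ∀ l ∈ P.part i, d i l ≤ 2 * r i

theorem capturesDense_of_card_lt {R : Finset α} (hR : #R < m) (P : Finpartition R) :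
    CapturesDense d m P := by
  rintro S hSR ⟨j, hj⟩ r hdense
  have := (hdense j hj).trans ((card_le_card (filter_subset _ S)).trans (card_le_card hSR))
  omega

theorem CapturesDense.extend (hsymm : ∀ i j, d i j = d j i)
    (htri : ∀ i j l, d i l ≤ d i j + d j l) {R : Finset α} {x : α} {ρ : ℝ}
    (hmin : ∀ y ∈ R, ∀ r, m ≤ #(ball d R y r) → ρ ≤ r)
    {P : Finpartition (R \ ball d R x ρ)} (hP : CapturesDense d m P)
    (hB : ball d R x ρ ≠ ⊥) :
    CapturesDense d m (P.extend hB sdiff_disjoint (sdiff_sup_cancel (filter_subset _ R))) := by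
  intro S hSR hS r hdense
  by_cases hSB : Disjoint S (ball d R x ρ)
  · obtain ⟨i, hi, hpart⟩ := hP S (subset_sdiff.2 ⟨hSR, hSB⟩) hS r hdense
    have hiP : i ∈ R \ ball d R x ρ := subset_sdiff.2 ⟨hSR, hSB⟩ hi
    refine ⟨i, hi, ?_⟩
    rwa [Finpartition.part_eq_of_mem _ (mem_insert_of_mem (P.part_mem.2 hiP)) (P.mem_part hiP)]
  · obtain ⟨i, hiS, hiB⟩ := not_disjoint_iff.1 hSB
    refine ⟨i, hiS, fun l hl => ?_⟩
    rw [Finpartition.part_eq_of_mem _ (mem_insert_self _ _) hiB] at hl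
    have hρ : ρ ≤ r i :=
      hmin i (hSR hiS) (r i) ((hdense i hiS).trans (card_le_card (ball_subset_ball d hSR _ _)))
    linarith [le_two_mul_of_mem_ball d hsymm htri hiB hl]

theorem exists_capturesDense (hm : 0 < m) (hsymm : ∀ i j, d i j = d j i)
    (htri : ∀ i j l, d i l ≤ d i j + d j l) (R : Finset α) :
    ∃ P : Finpartition R, #P.parts * m < #R + m ∧ CapturesDense d m P := by
  induction R using Finset.strongInduction with
  | H R ih =>
  by_cases hR : m ≤ #R
  · obtain ⟨x, ρ, hρ, hmin⟩ := exists_smallest_ball d m hm hR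
    have hBR : ball d R x ρ ⊆ R := filter_subset _ R
    have hB : (ball d R x ρ).Nonempty := card_pos.1 (hm.trans_le hρ)
    obtain ⟨P, hcard, hP⟩ := ih (R \ ball d R x ρ) (sdiff_ssubset hBR hB)
    refine ⟨_, ?_, hP.extend d m hsymm htri hmin hB.ne_empty⟩
    have := card_sdiff_add_card_eq_card hBR
    rw [Finpartition.card_extend, add_one_mul]
    omega
  · refine ⟨⊤, ?_, capturesDense_of_card_lt d m (not_le.1 hR) ⊤⟩
    have hle : #(⊤ : Finpartition R).parts ≤ 1 :=
      card_le_one.2 fun _ ha _ hb => by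
        rw [mem_singleton.1 (Finpartition.parts_top_subset R ha),
          mem_singleton.1 (Finpartition.parts_top_subset R hb)]
    have := (⊤ : Finpartition R).card_parts_le_card
    interval_cases h : #(⊤ : Finpartition R).parts <;> omega

end Greedy

theorem exists_clusterOf_eq_part {n k : ℕ} (P : Finpartition (univ : Finset (Fin n)))
    (hP : #P.parts ≤ k) : ∃ C : Fin n → Fin k, ∀ i, clusterOf C i = P.part i := by
  let e : P.parts ↪ Fin k := P.parts.equivFin.toEmbedding.trans (Fin.castLEEmb hP)
  refine ⟨fun i => e ⟨P.part i, P.part_mem.2 (mem_univ i)⟩, fun i => ?_⟩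
  ext j
  simp [clusterOf, P.mem_part_iff_part_eq_part (mem_univ j) (mem_univ i)]

theorem le_of_mul_ceil_div_lt {p n k : ℕ} (hk : 0 < k)
    (h : p * ⌈(n : ℝ) / k⌉₊ < n + ⌈(n : ℝ) / k⌉₊) : p ≤ k := by
  set m := ⌈(n : ℝ) / k⌉₊
  have hk' : (0 : ℝ) < k := by exact_mod_cast hk
  have hnm : n ≤ k * m := by
    have := Nat.le_ceil ((n : ℝ) / k)
    rw [div_le_iff₀ hk'] at this
    exact_mod_cast (by linarith : (n : ℝ) ≤ k * m)
  exact Nat.lt_succ_iff.1 (Nat.lt_of_mul_lt_mul_right (by linarith : _ < (k + 1) * m))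

theorem avgLoss_le_of_forall_le {n : ℕ} (d : Fin n → Fin n → ℝ) {i : Fin n}
    {B : Finset (Fin n)} (hB : B.Nonempty) {b : ℝ} (h : ∀ l ∈ B, d i l ≤ b) :
    avgLoss d i B ≤ b := by
  rw [avgLoss, div_le_iff₀ (by exact_mod_cast hB.card_pos), mul_comm, ← nsmul_eq_mul]
  exact sum_le_card_nsmul B (d i) b h

theorem IsPseudometric.nonneg_s13 {n : ℕ} {d : Fin n → Fin n → ℝ} (hd : IsPseudometric d)
    (i j : Fin n) : 0 ≤ d i j := by
  obtain ⟨hd0, hsymm, htri⟩ := hd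
  linarith [htri i j i, hd0 i, hsymm i j]

/-- Bicriteria core approximation: for any `n` agents with a metric `d`, any `k` with
`1 ≤ k ≤ n`, and any `δ > 1`, there is a `k`-clustering `C` in the `(2δ/(δ−1), δ)`-core for
the average loss — no group `S` with `|S| ≥ δ·n/k` has `(2δ/(δ−1))·ℓ_i(S) < ℓ_i(C(i))` for
all `i ∈ S`. -/
theorem stmt13 (n k : ℕ) (hk : 1 ≤ k) (hkn : k ≤ n) (d : Fin n → Fin n → ℝ)
    (hd : IsPseudometric d) (δ : ℝ) (hδ : 1 < δ) :
    ∃ C : Fin n → Fin k,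
      ¬ ∃ S : Finset (Fin n), δ * (n : ℝ) / k ≤ S.card ∧
          ∀ i ∈ S, (2 * δ / (δ - 1)) * avgLoss d i S < avgLoss d i (clusterOf C i) := by
  have hk' : (0 : ℝ) < k := by exact_mod_cast hk
  have hn : (0 : ℝ) < n := by exact_mod_cast hk.trans hkn
  set m := ⌈(n : ℝ) / k⌉₊
  obtain ⟨P, hcard, hP⟩ :=
    exists_capturesDense d m (Nat.ceil_pos.2 (div_pos hn hk')) hd.2.1 hd.2.2 univ
  rw [card_univ, Fintype.card_fin] at hcard
  obtain ⟨C, hC⟩ := exists_clusterOf_eq_part P (le_of_mul_ceil_div_lt hk hcard)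
  refine ⟨C, fun ⟨S, hS, hdev⟩ => ?_⟩
  have hSne : S.Nonempty :=
    card_pos.1 <| Nat.cast_pos.1 <| (div_pos (mul_pos (by linarith) hn) hk').trans_le hS
  have hSn : (n : ℝ) / k ≤ #S / δ := by
    rw [le_div_iff₀ (by linarith), div_mul_eq_mul_div, mul_comm]; exact hS
  have hdense : ∀ j ∈ S, m ≤ #(ball d S j (δ / (δ - 1) * avgLoss d j S)) := fun j _ =>
    Nat.ceil_le.2 <| hSn.trans <| (div_le_iff₀' (by linarith)).2 <|
      card_le_mul_card_filter_le_mul_avg S (d j) (fun l _ => hd.nonneg_s13 j l) hδ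
  obtain ⟨i, hi, hpart⟩ := hP S (subset_univ S) hSne _ hdense
  have hle := avgLoss_le_of_forall_le d (P.part_nonempty.2 (mem_univ i)) hpart
  have hlt := hdev i hi
  rw [hC] at hlt
  linarith [show 2 * δ / (δ - 1) * avgLoss d i S = 2 * (δ / (δ - 1) * avgLoss d i S) by ring]
end

section
/- Suppose the n agents are points on the real line, i.e., each agent i has a position x_i ∈ ℝ and d(i,j) = |x_i − x_j|. Then for any number of clusters k with 1 ≤ k ≤ n, there exists a k-clustering that is in the (exact, i.e. 1-)core for the maximum loss. -/
open scoped Classical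

/-!
Greedy peeling: as long as at least `m = ⌈n/k⌉` agents remain, cut off the shortest window
`[x a, x b]` of the line containing `m` of them; a last group with fewer than `m` agents is kept
whole. This uses at most `k` clusters. Given a would-be blocking group `S` with `|S| ≥ m`,
look at the first window `W` that meets `S`. Then `S` lies among the agents remaining at that
moment, so its span `[min S, max S]` is at least as long as `W`. If `W` contains the leftmost
(or rightmost) point of `S`, that agent's loss in `S` is the span of `S`, which bounds its loss
in `W`; otherwise `W ⊆ [min S, max S]` and an agent of `S ∩ W` loses nothing by staying in `W`.
-/

open Finset

variable {n : ℕ}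

theorem le_maxLoss {d : Fin n → Fin n → ℝ} {S : Finset (Fin n)} {i j : Fin n} (hj : j ∈ S) :
    d i j ≤ maxLoss d i S := by
  rw [maxLoss, maxOver, dif_pos ⟨j, hj⟩]
  exact le_sup' (d i) hj

theorem maxLoss_le {d : Fin n → Fin n → ℝ} {S : Finset (Fin n)} {i : Fin n} {c : ℝ}
    (hS : S.Nonempty) (h : ∀ j ∈ S, d i j ≤ c) : maxLoss d i S ≤ c := by
  rw [maxLoss, maxOver, dif_pos hS]
  exact sup'_le hS (d i) h

section Peeling

variable (sel : Finset (Fin n) → Finset (Fin n))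

def peel : ℕ → Finset (Fin n)
  | 0 => univ
  | t + 1 => peel t \ sel (peel t)

variable {sel}

theorem mem_peel_iff {i : Fin n} {t : ℕ} :
    i ∈ peel sel t ↔ ∀ s < t, i ∉ sel (peel sel s) := by
  induction t with
  | zero => simp [peel]
  | succ t ih => simp only [peel, mem_sdiff, ih, Nat.lt_succ_iff_lt_or_eq, or_imp, forall_and,
      forall_eq]

theorem eq_of_mem_sel_peel (hsub : ∀ R, sel R ⊆ R) {i : Fin n} {s t : ℕ}
    (hs : i ∈ sel (peel sel s)) (ht : i ∈ sel (peel sel t)) : s = t := by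
  by_contra hne
  rcases Nat.lt_or_gt_of_ne hne with hst | hts
  · exact mem_peel_iff.mp (hsub _ ht) s hst hs
  · exact mem_peel_iff.mp (hsub _ hs) t hts ht

theorem card_peel_le (hsub : ∀ R, sel R ⊆ R) {m : ℕ} (hcard : ∀ R, min m #R ≤ #(sel R))
    (t : ℕ) : #(peel sel t) ≤ n - t * m := by
  induction t with
  | zero => simp [peel]
  | succ t ih =>
    rw [peel, card_sdiff_of_subset (hsub _), Nat.succ_mul]
    have := hcard (peel sel t)
    omega

theorem exists_clustering_of_peel (hsub : ∀ R, sel R ⊆ R) {m k : ℕ}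
    (hcard : ∀ R, min m #R ≤ #(sel R)) (hkm : n ≤ k * m) :
    ∃ C : Fin n → Fin k, ∀ i t, i ∈ sel (peel sel t) ↔ (C i : ℕ) = t := by
  have hcover : ∀ i, ∃ t : Fin k, i ∈ sel (peel sel t) := by
    intro i
    have hk : peel sel k = ∅ := card_eq_zero.mp (by have := card_peel_le hsub hcard k; omega)
    obtain ⟨t, htk, hit⟩ : ∃ t < k, i ∈ sel (peel sel t) := by
      simpa using mt mem_peel_iff.mpr (hk ▸ notMem_empty i)
    exact ⟨⟨t, htk⟩, hit⟩
  choose C hC using hcover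
  exact ⟨C, fun i t => ⟨eq_of_mem_sel_peel hsub (hC i), fun h => h ▸ hC i⟩⟩

theorem clusterOf_eq_sel_peel {k : ℕ} {C : Fin n → Fin k}
    (hC : ∀ i t, i ∈ sel (peel sel t) ↔ (C i : ℕ) = t) {i : Fin n} {t : ℕ}
    (hi : i ∈ sel (peel sel t)) : clusterOf C i = sel (peel sel t) := by
  ext j
  simp only [clusterOf, mem_filter, mem_univ, true_and, hC j, ← (hC i t).mp hi, Fin.val_inj]

theorem inCore_of_peel {k : ℕ} (hn : 0 < n) (hk : 0 < k)
    (ℓ : Fin n → Finset (Fin n) → ℝ) {C : Fin n → Fin k}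
    (hC : ∀ i t, i ∈ sel (peel sel t) ↔ (C i : ℕ) = t)
    (hgood : ∀ R S, S ⊆ R → ⌈(n : ℝ) / k⌉₊ ≤ #S → ∀ i₀ ∈ S, i₀ ∈ sel R →
      ∃ i ∈ S, i ∈ sel R ∧ ℓ i (sel R) ≤ ℓ i S) :
    InCore 1 ℓ C := by
  rintro ⟨S, hS, hblock⟩
  obtain ⟨j, hj⟩ : S.Nonempty := card_pos.mp <| by
    exact_mod_cast (div_pos (Nat.cast_pos.mpr hn) (Nat.cast_pos.mpr hk)).trans_le hS
  have hmeet : ∃ t, ∃ i ∈ S, i ∈ sel (peel sel t) := ⟨C j, j, hj, (hC j _).mpr rfl⟩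
  have hSsub : S ⊆ peel sel (Nat.find hmeet) := fun j hj =>
    mem_peel_iff.mpr fun s hs hjs => Nat.find_min hmeet hs ⟨j, hj, hjs⟩
  obtain ⟨i₀, hi₀S, hi₀W⟩ := Nat.find_spec hmeet
  obtain ⟨i, hiS, hiW, hle⟩ := hgood _ S hSsub (Nat.ceil_le.mpr hS) i₀ hi₀S hi₀W
  have hlt := hblock i hiS
  rw [one_mul, clusterOf_eq_sel_peel hC hiW] at hlt
  exact hle.not_gt hlt

end Peeling

section Line

variable (x : Fin n → ℝ)

local notation "ℓ" => maxLoss (fun i j => |x i - x j|)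

noncomputable def window (R : Finset (Fin n)) (a b : Fin n) : Finset (Fin n) :=
  R.filter fun i => x i ∈ Set.Icc (x a) (x b)

theorem exists_shortest_window {R : Finset (Fin n)} (hR : R.Nonempty) {m : ℕ}
    (hm : m ≤ #R) :
    ∃ p : Fin n × Fin n, m ≤ #(window x R p.1 p.2) ∧
      ∀ u v, m ≤ #(window x R u v) → x p.2 - x p.1 ≤ x v - x u := by
  obtain ⟨a, -, ha⟩ := R.exists_min_image x hR
  obtain ⟨b, -, hb⟩ := R.exists_max_image x hR
  have hab : window x R a b = R := filter_true_of_mem fun i hi => ⟨ha i hi, hb i hi⟩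
  obtain ⟨p, hp, hpmin⟩ := exists_min_image {p | m ≤ #(window x R p.1 p.2)}
    (fun p => x p.2 - x p.1) ⟨(a, b), by simpa [hab] using hm⟩
  exact ⟨p, by simpa using hp, fun u v huv => hpmin (u, v) (by simpa using huv)⟩

noncomputable def shortestWindow (m : ℕ) (R : Finset (Fin n)) : Finset (Fin n) :=
  if h : R.Nonempty ∧ m ≤ #R then
    let p := (exists_shortest_window x h.1 h.2).choose
    window x R p.1 p.2
  else R

variable {x}

theorem shortestWindow_subset (m : ℕ) (R : Finset (Fin n)) : shortestWindow x m R ⊆ R := by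
  unfold shortestWindow
  split_ifs
  exacts [filter_subset _ _, subset_rfl]

theorem min_le_card_shortestWindow (m : ℕ) (R : Finset (Fin n)) :
    min m #R ≤ #(shortestWindow x m R) := by
  unfold shortestWindow
  split_ifs with h
  · exact (min_le_left _ _).trans (exists_shortest_window x h.1 h.2).choose_spec.1
  · exact min_le_right _ _

theorem sub_le_maxLoss_of_mem {S : Finset (Fin n)} {i j : Fin n} (hj : j ∈ S) :
    x i - x j ≤ ℓ i S :=
  (le_abs_self _).trans (le_maxLoss (d := fun i j => |x i - x j|) hj)

theorem sub_le_maxLoss_of_mem' {S : Finset (Fin n)} {i j : Fin n} (hj : j ∈ S) :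
    x j - x i ≤ ℓ i S :=
  (le_abs_self _).trans <|
    (abs_sub_comm _ _).trans_le (le_maxLoss (d := fun i j => |x i - x j|) hj)

theorem maxLoss_le_of_forall_mem_Icc {W S : Finset (Fin n)} {i u v : Fin n}
    (hW : W.Nonempty) (hu : u ∈ S) (hv : v ∈ S) (h : ∀ j ∈ W, x j ∈ Set.Icc (x u) (x v)) :
    ℓ i W ≤ ℓ i S :=
  maxLoss_le hW fun j hj => abs_sub_le_iff.mpr
    ⟨by linarith [(h j hj).1, sub_le_maxLoss_of_mem (x := x) (i := i) hu],
      by linarith [(h j hj).2, sub_le_maxLoss_of_mem' (x := x) (i := i) hv]⟩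

theorem maxLoss_window_le {R : Finset (Fin n)} {a b i : Fin n}
    (hi : i ∈ window x R a b) :
    ℓ i (window x R a b) ≤ x b - x a :=
  maxLoss_le ⟨i, hi⟩ fun _ hj =>
    abs_sub_le_of_le_of_le (mem_filter.mp hi).2.1 (mem_filter.mp hi).2.2
      (mem_filter.mp hj).2.1 (mem_filter.mp hj).2.2

theorem exists_maxLoss_window_le {R S : Finset (Fin n)} {m : ℕ} {a b : Fin n}
    (hmin : ∀ u v, m ≤ #(window x R u v) → x b - x a ≤ x v - x u)
    (hSR : S ⊆ R) (hS : m ≤ #S) {i₀ : Fin n} (hi₀S : i₀ ∈ S)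
    (hi₀W : i₀ ∈ window x R a b) :
    ∃ i ∈ S, i ∈ window x R a b ∧ ℓ i (window x R a b) ≤ ℓ i S := by
  obtain ⟨u, huS, hu⟩ := S.exists_min_image x ⟨i₀, hi₀S⟩
  obtain ⟨v, hvS, hv⟩ := S.exists_max_image x ⟨i₀, hi₀S⟩
  have hspan : x b - x a ≤ x v - x u :=
    hmin u v (hS.trans (card_le_card fun j hj => mem_filter.mpr ⟨hSR hj, hu j hj, hv j hj⟩))
  obtain ⟨-, hai₀, hi₀b⟩ := mem_filter.mp hi₀W
  by_cases hau : x a ≤ x u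
  · have huW : u ∈ window x R a b :=
      mem_filter.mpr ⟨hSR huS, hau, (hu i₀ hi₀S).trans hi₀b⟩
    exact ⟨u, huS, huW, (maxLoss_window_le huW).trans
      (hspan.trans (sub_le_maxLoss_of_mem' hvS))⟩
  by_cases hvb : x v ≤ x b
  · have hvW : v ∈ window x R a b :=
      mem_filter.mpr ⟨hSR hvS, hai₀.trans (hv i₀ hi₀S), hvb⟩
    exact ⟨v, hvS, hvW, (maxLoss_window_le hvW).trans
      (hspan.trans (sub_le_maxLoss_of_mem huS))⟩
  refine ⟨i₀, hi₀S, hi₀W, maxLoss_le_of_forall_mem_Icc ⟨i₀, hi₀W⟩ huS hvS fun j hj => ?_⟩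
  obtain ⟨-, haj, hjb⟩ := mem_filter.mp hj
  exact ⟨by linarith, by linarith⟩

theorem exists_maxLoss_shortestWindow_le {R S : Finset (Fin n)} {m : ℕ} (hSR : S ⊆ R)
    (hS : m ≤ #S) {i₀ : Fin n} (hi₀S : i₀ ∈ S) (hi₀W : i₀ ∈ shortestWindow x m R) :
    ∃ i ∈ S, i ∈ shortestWindow x m R ∧ ℓ i (shortestWindow x m R) ≤ ℓ i S := by
  have h : R.Nonempty ∧ m ≤ #R := ⟨⟨i₀, hSR hi₀S⟩, hS.trans (card_le_card hSR)⟩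
  rw [shortestWindow, dif_pos h] at hi₀W ⊢
  exact exists_maxLoss_window_le (exists_shortest_window x h.1 h.2).choose_spec.2
    hSR hS hi₀S hi₀W

end Line

/-- On the real line (agents at positions `x i`, `d i j = |x i − x j|`), for any `k` with
`1 ≤ k ≤ n` there exists a `k`-clustering in the exact core for the maximum loss. -/
theorem stmt14 (n k : ℕ) (hk : 1 ≤ k) (hkn : k ≤ n) (x : Fin n → ℝ) :
    ∃ C : Fin n → Fin k, InCore 1 (maxLoss (fun i j => |x i - x j|)) C := by
  have hkm : n ≤ k * ⌈(n : ℝ) / k⌉₊ := by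
    exact_mod_cast (div_le_iff₀' (by positivity)).mp (Nat.le_ceil ((n : ℝ) / k))
  obtain ⟨C, hC⟩ := exists_clustering_of_peel (shortestWindow_subset _)
    (min_le_card_shortestWindow (x := x) _) hkm
  exact ⟨C, inCore_of_peel (by omega) hk _ hC fun _ _ hSR hS _ =>
    exists_maxLoss_shortestWindow_le hSR hS⟩
end
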